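/- Fixed-point of alternating closures: let R(C) denote the least regular cone containing C and T_L(C) = R(cp_L(C)). For any regular cone C ⊆ Q[X] (X finite) containing 1 and any polynomial lattice L, there exists n ≥ 0 such that T_L^n(C) is the least regular cone that contains C and is closed under cutting planes with respect to L. -/

import Mathlib

/-!
The units `U(T_L^i(C))` of the iterates form an ascending chain of ideals of the Noetherian
ring `ℚ[X]`, so they stabilise at some `n`. The cone `cp_L(T_L^n(C))` lies between
`T_L^n(C)` and `T_L^{n+1}(C)`, so its units are the ideal `U(T_L^n(C))`: it is already
regular, hence equal to `T_L^{n+1}(C)`, which is therefore closed under cutting planes.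
Minimality holds because `T_L` maps every regular cut-closed cone containing `C` into itself.
-/

open MvPolynomial Pointwise

def IsCone {σ : Type} (C : Set (MvPolynomial σ ℚ)) : Prop :=
  (0 : MvPolynomial σ ℚ) ∈ C ∧ (∀ x ∈ C, ∀ y ∈ C, x + y ∈ C) ∧
    ∀ (a : ℚ), 0 ≤ a → ∀ x ∈ C, a • x ∈ C

def unitsOf {σ : Type} (C : Set (MvPolynomial σ ℚ)) : Set (MvPolynomial σ ℚ) :=
  C ∩ (-C)

def IsRegularCone {σ : Type} (C : Set (MvPolynomial σ ℚ)) : Prop :=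
  IsCone C ∧ (1 : MvPolynomial σ ℚ) ∈ C ∧
    ∃ I : Ideal (MvPolynomial σ ℚ), (I : Set (MvPolynomial σ ℚ)) = unitsOf C

/-- `D` is closed under cutting planes with respect to `L`. -/
def ClosedCP {σ : Type} (L D : Set (MvPolynomial σ ℚ)) : Prop :=
  ∀ (a b : ℤ), 0 < a → ∀ p ∈ L,
    a • p + (b : MvPolynomial σ ℚ) ∈ D →
      p + ((⌊(b : ℚ) / (a : ℚ)⌋ : ℤ) : MvPolynomial σ ℚ) ∈ D

/-- `cp_L(C)`: the least cone containing `C` closed under cutting planes w.r.t. `L`. -/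
def cpClosure {σ : Type} (L C : Set (MvPolynomial σ ℚ)) : Set (MvPolynomial σ ℚ) :=
  ⋂₀ {D | IsCone D ∧ C ⊆ D ∧ ClosedCP L D}

/-- `R(C)`: the least regular cone containing `C`. -/
def leastReg {σ : Type} (C : Set (MvPolynomial σ ℚ)) : Set (MvPolynomial σ ℚ) :=
  ⋂₀ {D | IsRegularCone D ∧ C ⊆ D}

/-- The integer span of a set `G`. -/
def intSpan {σ : Type} (G : Set (MvPolynomial σ ℚ)) : Set (MvPolynomial σ ℚ) :=
  {q | ∃ (s : Finset (MvPolynomial σ ℚ)) (c : MvPolynomial σ ℚ → ℤ),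
      (↑s : Set (MvPolynomial σ ℚ)) ⊆ G ∧ q = ∑ p ∈ s, c p • p}

/-- A polynomial lattice: the sum of an ideal and a finitely generated point lattice. -/
def IsPolyLattice {σ : Type} (L : Set (MvPolynomial σ ℚ)) : Prop :=
  ∃ (I : Ideal (MvPolynomial σ ℚ)) (G : Set (MvPolynomial σ ℚ)),
    G.Finite ∧ L = (↑I : Set (MvPolynomial σ ℚ)) + intSpan G

section Cones

variable {σ : Type}

lemma unitsOf_mono {S T : Set (MvPolynomial σ ℚ)} (h : S ⊆ T) :
    unitsOf S ⊆ unitsOf T :=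
  fun _ hx => ⟨h hx.1, Set.mem_neg.2 (h (Set.mem_neg.1 hx.2))⟩

lemma isCone_sInter {F : Set (Set (MvPolynomial σ ℚ))} (h : ∀ D ∈ F, IsCone D) :
    IsCone (⋂₀ F) := by
  refine ⟨Set.mem_sInter.2 fun D hD => (h D hD).1, ?_, ?_⟩
  · intro x hx y hy
    exact Set.mem_sInter.2 fun D hD =>
      (h D hD).2.1 x (Set.mem_sInter.1 hx D hD) y (Set.mem_sInter.1 hy D hD)
  · intro a ha x hx
    exact Set.mem_sInter.2 fun D hD => (h D hD).2.2 a ha x (Set.mem_sInter.1 hx D hD)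

lemma unitsOf_sInter (F : Set (Set (MvPolynomial σ ℚ))) :
    unitsOf (⋂₀ F) = ⋂ D ∈ F, unitsOf D := by
  ext x
  simp only [unitsOf, Set.mem_inter_iff, Set.mem_neg, Set.mem_sInter, Set.mem_iInter]
  exact ⟨fun hx D hD => ⟨hx.1 D hD, hx.2 D hD⟩,
    fun hx => ⟨fun D hD => (hx D hD).1, fun D hD => (hx D hD).2⟩⟩

lemma isRegularCone_sInter {F : Set (Set (MvPolynomial σ ℚ))}
    (h : ∀ D ∈ F, IsRegularCone D) : IsRegularCone (⋂₀ F) := by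
  refine ⟨isCone_sInter fun D hD => (h D hD).1,
    Set.mem_sInter.2 fun D hD => (h D hD).2.1, ?_⟩
  choose I hI using fun D : F => (h D D.2).2.2
  refine ⟨⨅ D : F, I D, ?_⟩
  rw [unitsOf_sInter, Set.biInter_eq_iInter, Submodule.coe_iInf]
  exact Set.iInter_congr hI

lemma IsRegularCone.of_subset_of_unitsOf_subset {S E : Set (MvPolynomial σ ℚ)}
    (hS : IsRegularCone S) (hE : IsCone E) (hSE : S ⊆ E)
    (hU : unitsOf E ⊆ unitsOf S) : IsRegularCone E := by
  obtain ⟨I, hI⟩ := hS.2.2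
  exact ⟨hE, hSE hS.2.1, I, hI.trans (subset_antisymm (unitsOf_mono hSE) hU)⟩

lemma isCone_cpClosure (L S : Set (MvPolynomial σ ℚ)) : IsCone (cpClosure L S) :=
  isCone_sInter fun _ hD => hD.1

lemma subset_cpClosure (L S : Set (MvPolynomial σ ℚ)) : S ⊆ cpClosure L S :=
  fun _ hx => Set.mem_sInter.2 fun _ hD => hD.2.1 hx

lemma closedCP_cpClosure (L S : Set (MvPolynomial σ ℚ)) :
    ClosedCP L (cpClosure L S) :=
  fun a b ha p hp hmem => Set.mem_sInter.2 fun D hD =>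
    hD.2.2 a b ha p hp (Set.mem_sInter.1 hmem D hD)

lemma cpClosure_subset {L S D : Set (MvPolynomial σ ℚ)} (hD : IsCone D)
    (hSD : S ⊆ D) (hcp : ClosedCP L D) : cpClosure L S ⊆ D :=
  Set.sInter_subset_of_mem ⟨hD, hSD, hcp⟩

lemma isRegularCone_leastReg (S : Set (MvPolynomial σ ℚ)) : IsRegularCone (leastReg S) :=
  isRegularCone_sInter fun _ hD => hD.1

lemma subset_leastReg (S : Set (MvPolynomial σ ℚ)) : S ⊆ leastReg S :=
  fun _ hx => Set.mem_sInter.2 fun _ hD => hD.2 hx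

lemma leastReg_subset {S D : Set (MvPolynomial σ ℚ)} (hD : IsRegularCone D)
    (hSD : S ⊆ D) : leastReg S ⊆ D :=
  Set.sInter_subset_of_mem ⟨hD, hSD⟩

lemma leastReg_eq_self {S : Set (MvPolynomial σ ℚ)} (hS : IsRegularCone S) :
    leastReg S = S :=
  subset_antisymm (leastReg_subset hS subset_rfl) (subset_leastReg S)

lemma exists_unitsOf_succ_subset [Finite σ] {f : ℕ → Set (MvPolynomial σ ℚ)}
    (hreg : ∀ n, IsRegularCone (f n)) (hf : Monotone f) :
    ∃ n, unitsOf (f (n + 1)) ⊆ unitsOf (f n) := by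
  choose I hI using fun n => (hreg n).2.2
  have hI_mono : Monotone I := fun m n hmn => by
    rw [← SetLike.coe_subset_coe, hI, hI]
    exact unitsOf_mono (hf hmn)
  obtain ⟨n, hn⟩ :=
    monotone_stabilizes_iff_noetherian.mpr inferInstance ⟨I, hI_mono⟩
  refine ⟨n, ?_⟩
  rw [← hI, ← hI]
  exact SetLike.coe_subset_coe.2 (hn (n + 1) n.le_succ).ge

end Cones

section AlternatingClosure

variable {σ : Type} (L : Set (MvPolynomial σ ℚ))

/-- `T_L(S) = R(cp_L(S))`. -/
def altClosure (S : Set (MvPolynomial σ ℚ)) : Set (MvPolynomial σ ℚ) :=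
  leastReg (cpClosure L S)

variable {L}

lemma subset_altClosure (S : Set (MvPolynomial σ ℚ)) : S ⊆ altClosure L S :=
  (subset_cpClosure L S).trans (subset_leastReg _)

lemma monotone_altClosure_iterate (C : Set (MvPolynomial σ ℚ)) :
    Monotone fun n => (altClosure L)^[n] C :=
  fun _ _ hmn => Function.monotone_iterate_of_id_le subset_altClosure hmn C

lemma isRegularCone_altClosure_iterate {C : Set (MvPolynomial σ ℚ)}
    (hC : IsRegularCone C) : ∀ n, IsRegularCone ((altClosure L)^[n] C)
  | 0 => hC
  | n + 1 => by
    rw [Function.iterate_succ_apply']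
    exact isRegularCone_leastReg _

lemma altClosure_iterate_subset {C D : Set (MvPolynomial σ ℚ)} (hD : IsRegularCone D)
    (hCD : C ⊆ D) (hcp : ClosedCP L D) : ∀ n, (altClosure L)^[n] C ⊆ D
  | 0 => hCD
  | n + 1 => by
    rw [Function.iterate_succ_apply']
    exact leastReg_subset hD
      (cpClosure_subset hD.1 (altClosure_iterate_subset hD hCD hcp n) hcp)

lemma altClosure_eq_cpClosure {S : Set (MvPolynomial σ ℚ)} (hS : IsRegularCone S)
    (hU : unitsOf (altClosure L S) ⊆ unitsOf S) : altClosure L S = cpClosure L S :=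
  leastReg_eq_self <| hS.of_subset_of_unitsOf_subset (isCone_cpClosure L S)
    (subset_cpClosure L S) ((unitsOf_mono (subset_leastReg _)).trans hU)

end AlternatingClosure

theorem alternating_closures_fixed_point_general {σ : Type} [Fintype σ]
    (C L : Set (MvPolynomial σ ℚ)) (hC : IsRegularCone C) :
    ∃ n : ℕ,
      IsRegularCone ((fun S => leastReg (cpClosure L S))^[n] C) ∧
      C ⊆ (fun S => leastReg (cpClosure L S))^[n] C ∧
      ClosedCP L ((fun S => leastReg (cpClosure L S))^[n] C) ∧
      ∀ D : Set (MvPolynomial σ ℚ), IsRegularCone D → C ⊆ D → ClosedCP L D →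
        (fun S => leastReg (cpClosure L S))^[n] C ⊆ D := by
  have hreg := isRegularCone_altClosure_iterate (L := L) hC
  have hmono := monotone_altClosure_iterate (L := L) C
  obtain ⟨n, hn⟩ := exists_unitsOf_succ_subset hreg hmono
  rw [Function.iterate_succ_apply'] at hn
  have hfix : (altClosure L)^[n + 1] C = cpClosure L ((altClosure L)^[n] C) := by
    rw [Function.iterate_succ_apply']
    exact altClosure_eq_cpClosure (hreg n) hn
  refine ⟨n + 1, hreg (n + 1), hmono (Nat.zero_le _), ?_,
    fun D hD hCD hcp => altClosure_iterate_subset hD hCD hcp (n + 1)⟩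
  exact (congrArg (ClosedCP L) hfix).mpr (closedCP_cpClosure L _)

/-- fixed point of alternating closures: let `R(C)` be the least regular
cone containing `C` and `T_L(C) = R(cp_L(C))`.  For any regular cone `C ⊆ ℚ[X]` (`X`
finite, `1 ∈ C` since `C` is regular) and any polynomial lattice `L`, there is `n ≥ 0`
such that `T_L^n(C)` is the least regular cone containing `C` that is closed under
cutting planes with respect to `L`. -/
theorem alternating_closures_fixed_point {σ : Type} [Fintype σ]
    (C L : Set (MvPolynomial σ ℚ)) (hC : IsRegularCone C) (hL : IsPolyLattice L) :
    ∃ n : ℕ,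
      IsRegularCone ((fun S => leastReg (cpClosure L S))^[n] C) ∧
      C ⊆ (fun S => leastReg (cpClosure L S))^[n] C ∧
      ClosedCP L ((fun S => leastReg (cpClosure L S))^[n] C) ∧
      ∀ D : Set (MvPolynomial σ ℚ), IsRegularCone D → C ⊆ D → ClosedCP L D →
        (fun S => leastReg (cpClosure L S))^[n] C ⊆ D :=
  alternating_closures_fixed_point_general C L hC
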